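/- arXiv:2205.04949 — 4 statements merged into one kernel-verified Lean document; each statement's English description precedes it below -/
import Mathlib

section
/- Let K be ℝ or ℂ, let w = (w₁,…,w_d) be positive real weights, and let (g,Γ) be a solution of the w-AlgDOP problem over K. If Γ₁ ∈ K[x₁,…,x_d] divides Γ, then (g,Γ₁) is also a solution of the w-AlgDOP problem over K. -/
open MvPolynomial

noncomputable section

/-- `P` has `w`-weighted degree at most `D`. -/
def WDegLE {K : Type*} [CommSemiring K] {d : ℕ} (w : Fin d → ℝ)
    (P : MvPolynomial (Fin d) K) (D : ℝ) : Prop :=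
  ∀ m ∈ P.support, (∑ i, w i * (m i : ℝ)) ≤ D

/-- `(g,Γ)` is a solution of the `w`-AlgDOP problem over `K`:
`g` is a symmetric `d×d` matrix of polynomials with `deg_w g i j ≤ w i + w j`,
`det g ≠ 0`, `Γ` is a squarefree divisor of `det g`, and `Γ` divides
`∑ j, g i j * ∂_j Γ` for each `i`. -/
def IsAlgDOP {K : Type*} [CommRing K] {d : ℕ} (w : Fin d → ℝ)
    (g : Matrix (Fin d) (Fin d) (MvPolynomial (Fin d) K))
    (Γ : MvPolynomial (Fin d) K) : Prop :=
  (∀ i j, g i j = g j i) ∧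
  (∀ i j, WDegLE w (g i j) (w i + w j)) ∧
  g.det ≠ 0 ∧ Squarefree Γ ∧ Γ ∣ g.det ∧
  (∀ i, Γ ∣ ∑ j, g i j * pderiv j Γ)

/-- If `(g,Γ)` is a solution of the `w`-AlgDOP problem over `K` and `Γ₁ ∣ Γ`, then
`(g,Γ₁)` is also a solution. -/
def FactorClaim (K : Type*) [CommRing K] : Prop :=
  ∀ (d : ℕ) (w : Fin d → ℝ), (∀ i, 0 < w i) →
    ∀ (g : Matrix (Fin d) (Fin d) (MvPolynomial (Fin d) K))
      (Γ Γ₁ : MvPolynomial (Fin d) K),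
      IsAlgDOP w g Γ → Γ₁ ∣ Γ → IsAlgDOP w g Γ₁


private lemma algDOP_factor_aux {K : Type*} [Field K] {d : ℕ}
    {g : Matrix (Fin d) (Fin d) (MvPolynomial (Fin d) K)}
    {Γ Γ₁ : MvPolynomial (Fin d) K} (hsf : Squarefree Γ)
    (hdiv : ∀ i, Γ ∣ ∑ j, g i j * pderiv j Γ) (hd : Γ₁ ∣ Γ) :
    Squarefree Γ₁ ∧ (∀ i, Γ₁ ∣ ∑ j, g i j * pderiv j Γ₁) := by
  obtain ⟨Γ₂, rfl⟩ := hd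
  have hsf1 : Squarefree Γ₁ := hsf.squarefree_of_dvd ⟨Γ₂, rfl⟩
  have hrel : IsRelPrime Γ₁ Γ₂ := fun z hz1 hz2 => hsf z (mul_dvd_mul hz1 hz2)
  refine ⟨hsf1, fun i => ?_⟩
  have key : Γ₁ ∣ (∑ j, g i j * pderiv j Γ₁) * Γ₂ := by
    have h1 : Γ₁ ∣ ∑ j, g i j * pderiv j (Γ₁ * Γ₂) :=
      dvd_trans ⟨Γ₂, rfl⟩ (hdiv i)
    have heq : (∑ j, g i j * pderiv j (Γ₁ * Γ₂)) =
        (∑ j, g i j * pderiv j Γ₁) * Γ₂ + Γ₁ * (∑ j, g i j * pderiv j Γ₂) := by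
      rw [Finset.sum_mul, Finset.mul_sum, ← Finset.sum_add_distrib]
      congr 1; ext j
      rw [pderiv_mul]; ring
    rw [heq] at h1
    exact (dvd_add_right (Dvd.intro _ rfl)).mp (by rwa [add_comm] at h1)
  exact hrel.dvd_of_dvd_mul_right key

private lemma factorClaim_of_field (K : Type*) [Field K] : FactorClaim K := by
  rintro d w hw g Γ Γ₁ ⟨hsym, hdeg, hdet, hsf, hΓdet, hdiv⟩ hd
  obtain ⟨hsf1, hdiv1⟩ := algDOP_factor_aux hsf hdiv hd
  exact ⟨hsym, hdeg, hdet, hsf1, hd.trans hΓdet, hdiv1⟩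

/-- Proposition 2.4: a divisor of the boundary of an AlgDOP solution again gives an
AlgDOP solution, for `K = ℝ` and for `K = ℂ`. -/
theorem algDOP_of_dvd_boundary : FactorClaim ℝ ∧ FactorClaim ℂ :=
  ⟨factorClaim_of_field ℝ, factorClaim_of_field ℂ⟩
end
end

section
/- Let Γ = (8y − 3x² − 6x + 1)·(y² − x³) ∈ ℂ[x,y]. Then the set of singular points of the affine curve Γ = 0, i.e. { (x,y) ∈ ℂ² : Γ(x,y) = 0, ∂ₓΓ(x,y) = 0, ∂_yΓ(x,y) = 0 }, is exactly the three-element set { (1/9, −1/27), (0,0), (1,1) }. -/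
open MvPolynomial

noncomputable section

/-- The boundary curve of the model (B2): the cuspidal cubic `y² = x³` together with
the cubically tangent parabola `8y = 3x² + 6x − 1`. -/
def Γb2 : MvPolynomial (Fin 2) ℂ :=
  (8 * X 1 - 3 * X 0 ^ 2 - 6 * X 0 + 1) * (X 1 ^ 2 - X 0 ^ 3)

lemma Γb2_C : Γb2 = (C 8 * X 1 - C 3 * X 0 ^ 2 - C 6 * X 0 + C 1) * (X 1 ^ 2 - X 0 ^ 3) := by
  simp [Γb2, map_ofNat]

lemma Γb2_pd0 : pderiv 0 Γb2 = (-6 * X 0 - 6) * (X 1 ^ 2 - X 0 ^ 3)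
    + (8 * X 1 - 3 * X 0 ^ 2 - 6 * X 0 + 1) * (-3 * X 0 ^ 2) := by
  rw [Γb2_C]
  simp only [pderiv_mul, pderiv_C_mul, pderiv_pow, map_add, map_sub, pderiv_C,
    pderiv_X_self, pderiv_X_of_ne (show (1:Fin 2) ≠ 0 by decide)]
  simp only [map_ofNat, map_one]
  ring

lemma Γb2_pd1 : pderiv 1 Γb2 = 8 * (X 1 ^ 2 - X 0 ^ 3)
    + (8 * X 1 - 3 * X 0 ^ 2 - 6 * X 0 + 1) * (2 * X 1) := by
  rw [Γb2_C]
  simp only [pderiv_mul, pderiv_C_mul, pderiv_pow, map_add, map_sub, pderiv_C,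
    pderiv_X_self, pderiv_X_of_ne (show (0:Fin 2) ≠ 1 by decide)]
  simp only [map_ofNat, map_one]
  ring

lemma Γb2_ev0 (x y : ℂ) : MvPolynomial.eval (fun i : Fin 2 => if i = 0 then x else y) Γb2
    = (8*y - 3*x^2 - 6*x + 1) * (y^2 - x^3) := by
  simp [Γb2_C]

lemma Γb2_ev1 (x y : ℂ) : MvPolynomial.eval (fun i : Fin 2 => if i = 0 then x else y) (pderiv 0 Γb2)
    = (-6*x - 6) * (y^2 - x^3) + (8*y - 3*x^2 - 6*x + 1) * (-3*x^2) := by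
  simp [Γb2_pd0]

lemma Γb2_ev2 (x y : ℂ) : MvPolynomial.eval (fun i : Fin 2 => if i = 0 then x else y) (pderiv 1 Γb2)
    = 8 * (y^2 - x^3) + (8*y - 3*x^2 - 6*x + 1) * (2*y) := by
  simp [Γb2_pd1]

lemma solveFG (x y : ℂ) (hF : 8*y - 3*x^2 - 6*x + 1 = 0) (hG : y^2 - x^3 = 0) :
    (x = 1/9 ∧ y = -1/27) ∨ (x = 1 ∧ y = 1) := by
  have key : (x - 1)^3 * (9*x - 1) = 0 := by
    linear_combination 64*hG - (8*y + 3*x^2 + 6*x - 1)*hF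
  rcases mul_eq_zero.mp key with h | h
  · have hx : x = 1 := sub_eq_zero.mp (pow_eq_zero_iff (n := 3) (by norm_num) |>.mp h)
    subst hx
    have hy : y = 1 := by linear_combination hF/8
    exact Or.inr ⟨rfl, hy⟩
  · have hx : x = 1/9 := by linear_combination h/9
    subst hx
    have hy : y = -1/27 := by linear_combination hF/8
    exact Or.inl ⟨rfl, hy⟩

/-- The set of singular points of the affine curve `Γ = 0`, where
`Γ = (8y − 3x² − 6x + 1)(y² − x³)`, is exactly
`{(1/9, −1/27), (0,0), (1,1)}`. -/
theorem singular_points_B2 :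
    {P : ℂ × ℂ |
        MvPolynomial.eval (fun i : Fin 2 => if i = 0 then P.1 else P.2) Γb2 = 0 ∧
        MvPolynomial.eval (fun i : Fin 2 => if i = 0 then P.1 else P.2) (pderiv 0 Γb2) = 0 ∧
        MvPolynomial.eval (fun i : Fin 2 => if i = 0 then P.1 else P.2) (pderiv 1 Γb2) = 0}
      = {((1 / 9 : ℂ), (-1 / 27 : ℂ)), (0, 0), (1, 1)} := by
  ext ⟨x, y⟩
  simp only [Set.mem_setOf_eq, Γb2_ev0, Γb2_ev1, Γb2_ev2, Set.mem_insert_iff,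
    Set.mem_singleton_iff, Prod.mk.injEq]
  constructor
  · rintro ⟨h0, h1, h2⟩
    rcases mul_eq_zero.mp h0 with hF | hG
    · have hG : y^2 - x^3 = 0 := by linear_combination h2/8 - (y/4)*hF
      rcases solveFG x y hF hG with ⟨hx, hy⟩ | ⟨hx, hy⟩
      · exact Or.inl ⟨hx, hy⟩
      · exact Or.inr (Or.inr ⟨hx, hy⟩)
    · have h2' : (8*y - 3*x^2 - 6*x + 1) * (2*y) = 0 := by linear_combination h2 - 8*hG
      rcases mul_eq_zero.mp h2' with hF | hy
      · rcases solveFG x y hF hG with ⟨hx, hy⟩ | ⟨hx, hy⟩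
        · exact Or.inl ⟨hx, hy⟩
        · exact Or.inr (Or.inr ⟨hx, hy⟩)
      · have hy : y = 0 := by linear_combination hy/2
        subst hy
        have hx : x = 0 := by
          have : x^3 = 0 := by linear_combination -hG
          exact pow_eq_zero_iff (n := 3) (by norm_num) |>.mp this
        exact Or.inr (Or.inl ⟨hx, rfl⟩)
  · rintro (⟨hx, hy⟩ | ⟨hx, hy⟩ | ⟨hx, hy⟩) <;> subst hx <;> subst hy <;>
      refine ⟨by ring, by ring, by ring⟩
end
end

section
/- For real parameters α, β, define the symmetric matrix of polynomials g_{(α,β)} = (y − x² + 1)·[[1,0],[0,αy]] + β·[[x²−1, 2xy],[2xy, 4x²y]], i.e. with entries a = (y − x² + 1) + β(x² − 1), b = 2βxy, c = αy(y − x² + 1) + 4βx²y, and let Ω = { (x,y) ∈ ℝ² : x² − 1 < y < 0 }. Then the matrix g_{(α,β)}(x,y) is positive definite at every point (x,y) ∈ Ω if and only if α < 0 and β ≤ 0. -/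
/-- The parabolic biangle model (B3): the cometric
`g_{(α,β)} = (y − x² + 1)·[[1,0],[0,αy]] + β·[[x²−1, 2xy],[2xy, 4x²y]]`,
with entries `a = (y − x² + 1) + β(x² − 1)`, `b = 2βxy`,
`c = αy(y − x² + 1) + 4βx²y`, is positive definite (i.e. `a > 0` and `ac − b² > 0`)
at every point of `Ω = {(x,y) : x² − 1 < y < 0}` if and only if `α < 0 ∧ β ≤ 0`. -/
theorem parabolic_biangle_posdef (α β : ℝ) :
    (∀ x y : ℝ, x ^ 2 - 1 < y → y < 0 →
        (0 < (y - x ^ 2 + 1) + β * (x ^ 2 - 1) ∧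
         0 < ((y - x ^ 2 + 1) + β * (x ^ 2 - 1)) *
               (α * y * (y - x ^ 2 + 1) + 4 * β * x ^ 2 * y)
             - (2 * β * x * y) ^ 2))
      ↔ (α < 0 ∧ β ≤ 0) := by
  constructor
  · intro h
    have hα : α < 0 := by
      obtain ⟨h1, h2⟩ := h 0 (-1/2) (by norm_num) (by norm_num)
      nlinarith
    refine ⟨hα, ?_⟩
    by_contra hβ
    push_neg at hβ
    set ε : ℝ := 4*β/(4*β - α) with hε
    have hden : 0 < 4*β - α := by linarith
    have hε0 : 0 < ε := by positivity
    have hε1 : ε < 1 := by rw [hε, div_lt_one hden]; linarith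
    have hkey : α*ε + 4*β*(1-ε) = 0 := by
      rw [hε]; field_simp; ring
    have hx2 : (Real.sqrt (1-ε))^2 = 1-ε := Real.sq_sqrt (by linarith)
    obtain ⟨h1, h2⟩ := h (Real.sqrt (1-ε)) (-ε/2)
      (by rw [hx2]; linarith) (by linarith)
    rw [show (2*β*Real.sqrt (1-ε)*(-ε/2))^2 = β^2*ε^2*(Real.sqrt (1-ε))^2 by ring]
      at h2
    rw [hx2] at h1 h2
    have hbr : α * (-ε/2) * (-ε/2 - (1-ε) + 1) + 4 * β * (1-ε) * (-ε/2)
        = -ε*β*(1-ε) := by linear_combination (-ε/4) * hkey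
    rw [hbr] at h2
    nlinarith [h2, mul_pos h1 (mul_pos hε0 (mul_pos hβ (sub_pos.mpr hε1))),
      mul_pos (mul_pos hβ hβ) (mul_pos (mul_pos hε0 hε0) (sub_pos.mpr hε1))]
  · rintro ⟨hα, hβ⟩ x y hxy hy
    have hu : 0 < y - x ^ 2 + 1 := by linarith
    have hx1 : x ^ 2 - 1 < 0 := by
      nlinarith [sq_nonneg x]
    have ha : 0 < (y - x ^ 2 + 1) + β * (x ^ 2 - 1) := by
      nlinarith [mul_nonneg (neg_nonneg.mpr hβ) (neg_nonneg.mpr hx1.le)]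
    refine ⟨ha, ?_⟩
    have haby : 0 < ((y - x ^ 2 + 1) + β * (x ^ 2 - 1)) - β * y := by
      nlinarith [mul_nonneg (neg_nonneg.mpr hβ) (by linarith : (0:ℝ) ≤ -(x^2 - 1 - y))]
    have hB : ((y - x ^ 2 + 1) + β * (x ^ 2 - 1)) * (α * (y - x ^ 2 + 1))
        + 4 * β * x ^ 2 * (((y - x ^ 2 + 1) + β * (x ^ 2 - 1)) - β * y) < 0 := by
      have t1 : ((y - x ^ 2 + 1) + β * (x ^ 2 - 1)) * (α * (y - x ^ 2 + 1)) < 0 :=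
        mul_neg_of_pos_of_neg ha (by nlinarith)
      have t2 : 4 * β * x ^ 2 * (((y - x ^ 2 + 1) + β * (x ^ 2 - 1)) - β * y) ≤ 0 := by
        apply mul_nonpos_of_nonpos_of_nonneg
        · nlinarith [sq_nonneg x]
        · linarith
      linarith
    have hD : ((y - x ^ 2 + 1) + β * (x ^ 2 - 1)) *
          (α * y * (y - x ^ 2 + 1) + 4 * β * x ^ 2 * y) - (2 * β * x * y) ^ 2
        = y * (((y - x ^ 2 + 1) + β * (x ^ 2 - 1)) * (α * (y - x ^ 2 + 1))
          + 4 * β * x ^ 2 * (((y - x ^ 2 + 1) + β * (x ^ 2 - 1)) - β * y)) := by ring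
    rw [hD]
    exact mul_pos_of_neg_of_neg hy hB
end

section
/- Let m, n ≥ 1 be integers and c₀₂ ∈ ℝ. Define Γ = (1−x)^m(1+x)^n − y², a = 1 − x², b = ½((n−m) − (n+m)x)·y, c = ¼((n−m) − (n+m)x)²·(1−x)^{m−1}(1+x)^{n−1} − c₀₂·Γ, and Ω = { (x,y) ∈ ℝ² : Γ(x,y) > 0 and x² < 1 }. Then: (1) ac − b² = Γ₀·Γ, where Γ₀ = ¼((n−m) − (n+m)x)² − c₀₂(1 − x²); and (2) the matrix [[a,b],[b,c]](x,y) is positive definite at every point (x,y) ∈ Ω if and only if c₀₂ < 0. -/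
open MvPolynomial

noncomputable section

/-- The model (B4): with `Γ = (1−x)^m(1+x)^n − y²`, `a = 1 − x²`,
`b = ½((n−m) − (n+m)x)·y`,
`c = ¼((n−m) − (n+m)x)²·(1−x)^{m−1}(1+x)^{n−1} − c₀₂·Γ`, and
`Ω = {(x,y) : Γ(x,y) > 0, x² < 1}`, one has
`ac − b² = Γ₀·Γ` with `Γ₀ = ¼((n−m) − (n+m)x)² − c₀₂(1−x²)`, and the matrix
`[[a,b],[b,c]]` is positive definite (i.e. `a > 0` and `ac − b² > 0`) at every point
of `Ω` if and only if `c₀₂ < 0`. -/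
theorem model_B4 (m n : ℕ) (hm : 1 ≤ m) (hn : 1 ≤ n) (c02 : ℝ) :
    let q : MvPolynomial (Fin 2) ℝ :=
      C (((n : ℝ) - (m : ℝ)) / 2) - C (((n : ℝ) + (m : ℝ)) / 2) * X 0
    let Γ : MvPolynomial (Fin 2) ℝ := (1 - X 0) ^ m * (1 + X 0) ^ n - X 1 ^ 2
    let a : MvPolynomial (Fin 2) ℝ := 1 - X 0 ^ 2
    let b : MvPolynomial (Fin 2) ℝ := q * X 1
    let c : MvPolynomial (Fin 2) ℝ :=
      q ^ 2 * (1 - X 0) ^ (m - 1) * (1 + X 0) ^ (n - 1) - C c02 * Γ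
    let Γ₀ : MvPolynomial (Fin 2) ℝ := q ^ 2 - C c02 * (1 - X 0 ^ 2)
    a * c - b ^ 2 = Γ₀ * Γ ∧
    ((∀ x y : ℝ,
        0 < MvPolynomial.eval (fun i : Fin 2 => if i = 0 then x else y) Γ →
        x ^ 2 < 1 →
        (0 < MvPolynomial.eval (fun i : Fin 2 => if i = 0 then x else y) a ∧
         0 < MvPolynomial.eval (fun i : Fin 2 => if i = 0 then x else y) (a * c - b ^ 2)))
      ↔ c02 < 0) := by
  obtain ⟨m', rfl⟩ : ∃ m', m = m' + 1 := ⟨m - 1, (Nat.succ_pred_eq_of_pos hm).symm⟩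
  obtain ⟨n', rfl⟩ : ∃ n', n = n' + 1 := ⟨n - 1, (Nat.succ_pred_eq_of_pos hn).symm⟩
  intro q Γ a b c Γ₀
  have key : a * c - b ^ 2 = Γ₀ * Γ := by
    simp only [q, Γ, a, b, c, Γ₀, Nat.add_sub_cancel]
    ring
  refine ⟨key, ?_⟩
  have hevΓ : ∀ x y : ℝ, MvPolynomial.eval (fun i : Fin 2 => if i = 0 then x else y) Γ
      = (1 - x) ^ (m' + 1) * (1 + x) ^ (n' + 1) - y ^ 2 := by
    intro x y; simp [Γ]
  have hevq : ∀ x y : ℝ, MvPolynomial.eval (fun i : Fin 2 => if i = 0 then x else y) q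
      = (((n' : ℝ) + 1) - ((m' : ℝ) + 1)) / 2 - (((n' : ℝ) + 1) + ((m' : ℝ) + 1)) / 2 * x := by
    intro x y; simp [q]
  have heva : ∀ x y : ℝ, MvPolynomial.eval (fun i : Fin 2 => if i = 0 then x else y) a
      = 1 - x ^ 2 := by
    intro x y; simp [a]
  have hevΓ₀ : ∀ x y : ℝ, MvPolynomial.eval (fun i : Fin 2 => if i = 0 then x else y) Γ₀
      = (MvPolynomial.eval (fun i : Fin 2 => if i = 0 then x else y) q) ^ 2
        - c02 * (1 - x ^ 2) := by
    intro x y; simp [Γ₀]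
  constructor
  · intro h
    by_contra hc
    push_neg at hc
    set x₀ : ℝ := (((n' : ℝ) + 1) - ((m' : ℝ) + 1)) / (((n' : ℝ) + 1) + ((m' : ℝ) + 1)) with hx₀
    have hden : (0:ℝ) < ((n' : ℝ) + 1) + ((m' : ℝ) + 1) := by positivity
    have hxlt : x₀ < 1 := by
      rw [hx₀, div_lt_one hden]; have : (0:ℝ) < (m':ℝ) + 1 := by positivity
      linarith
    have hxgt : -1 < x₀ := by
      rw [hx₀, lt_div_iff₀ hden]; have : (0:ℝ) < (n':ℝ) + 1 := by positivity
      linarith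
    have hx1 : x₀ ^ 2 < 1 := by nlinarith
    have hΓpos : 0 < MvPolynomial.eval (fun i : Fin 2 => if i = 0 then x₀ else (0:ℝ)) Γ := by
      rw [hevΓ]
      have h1 : (0:ℝ) < 1 - x₀ := by linarith
      have h2 : (0:ℝ) < 1 + x₀ := by linarith
      have := mul_pos (pow_pos h1 (m' + 1)) (pow_pos h2 (n' + 1))
      nlinarith
    obtain ⟨-, h2⟩ := h x₀ 0 hΓpos hx1
    rw [key, eval_mul, hevΓ₀] at h2
    have hq0 : MvPolynomial.eval (fun i : Fin 2 => if i = 0 then x₀ else (0:ℝ)) q = 0 := by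
      rw [hevq, hx₀]; field_simp
      ring
    rw [hq0] at h2
    have hΓ₀le : (0:ℝ) ^ 2 - c02 * (1 - x₀ ^ 2) ≤ 0 := by nlinarith
    nlinarith
  · intro hc x y hΓ hx
    have ha : (0:ℝ) < 1 - x ^ 2 := by linarith
    refine ⟨by rw [heva]; exact ha, ?_⟩
    rw [key, eval_mul, hevΓ₀]
    have : (0:ℝ) < (MvPolynomial.eval (fun i : Fin 2 => if i = 0 then x else y) q) ^ 2
        - c02 * (1 - x ^ 2) := by nlinarith [sq_nonneg (MvPolynomial.eval (fun i : Fin 2 => if i = 0 then x else y) q)]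
    exact mul_pos this hΓ
end
end
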